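/- arXiv:2110.01138 — 7 statements merged into one kernel-verified Lean document; each statement's English description precedes it below -/
import Mathlib

section
/- Let X be a T₀ topological space and let x₁, x₂ ∈ X with x₁ < x₂ in the specialization order. Then the two-point set A = {x₁, x₂} is b-closed in X, and the subspace A of X is homeomorphic to the Sierpiński space Σ2. -/
open TopologicalSpace

/-- The b-topology associated with a topological space `(X, t)`: the topology with base
`{U ∩ cl({x}) : x ∈ U, U open}`. -/
def bTop (X : Type) (t : TopologicalSpace X) : TopologicalSpace X :=
  TopologicalSpace.generateFrom
    {s | ∃ (U : Set X) (x : X), @IsOpen X t U ∧ x ∈ U ∧ s = U ∩ @closure X t {x}}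

/-- The specialization order of `(X, t)`: `x ≤ y` iff `x ∈ cl({y})`. -/
def specLE {X : Type} (t : TopologicalSpace X) (x y : X) : Prop :=
  x ∈ @closure X t {y}

/-- The subspace topology on a subset. -/
def subTop {X : Type} (t : TopologicalSpace X) (A : Set X) : TopologicalSpace A :=
  TopologicalSpace.induced Subtype.val t

/-- A class of topological spaces, viewed as the object class of a full subcategory of Top. -/
abbrev SpaceClass : Type 1 := (X : Type) → TopologicalSpace X → Prop

/-- All members of `K` are T₀ (i.e. `K` is a subcategory of `Top₀`). -/
def AllT0 (K : SpaceClass) : Prop := ∀ X t, K X t → @T0Space X t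

/-- `K` is closed under homeomorphisms. -/
def ClosedUnderHomeo (K : SpaceClass) : Prop :=
  ∀ (X Y : Type) (tX : TopologicalSpace X) (tY : TopologicalSpace Y),
    K X tX → Nonempty (@Homeomorph X Y tX tY) → K Y tY

/-- `K ⊄ Top₁`: `K` contains a space that is not T₁. -/
def NotSubT1 (K : SpaceClass) : Prop := ∃ X t, K X t ∧ ¬ @T1Space X t

/-- `μ : X → Xk` is a K-reflection for `X`: `Xk ∈ K`, `μ` is continuous and every continuous map
from `X` to a member of `K` factors uniquely (continuously) through `μ`. -/
def IsReflection (K : SpaceClass) {X Xk : Type} (tX : TopologicalSpace X)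
    (tk : TopologicalSpace Xk) (μ : X → Xk) : Prop :=
  K Xk tk ∧ @Continuous X Xk tX tk μ ∧
    ∀ (Z : Type) (tZ : TopologicalSpace Z), K Z tZ →
      ∀ f : X → Z, @Continuous X Z tX tZ f →
        ∃! g : Xk → Z, @Continuous Xk Z tk tZ g ∧ g ∘ μ = f

/-- `K` is reflective in `Top₀`: every T₀ space admits a K-reflection. -/
def IsReflective (K : SpaceClass) : Prop :=
  ∀ (X : Type) (tX : TopologicalSpace X), @T0Space X tX →
    ∃ (Xk : Type) (tk : TopologicalSpace Xk) (μ : X → Xk), IsReflection K tX tk μ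

/-- `K` is b-closed-hereditary. -/
def BClosedHereditary (K : SpaceClass) : Prop :=
  ∀ (X : Type) (tX : TopologicalSpace X) (A : Set X),
    K X tX → @IsClosed X (bTop X tX) A → K A (subTop tX A)

/-- `K` is productive. -/
def Productive (K : SpaceClass) : Prop :=
  ∀ (I : Type) (X : I → Type) (t : ∀ i, TopologicalSpace (X i)),
    (∀ i, K (X i) (t i)) → K (∀ i, X i) (@Pi.topologicalSpace I X t)

/-- `K` has equalizers. -/
def HasEqualizers (K : SpaceClass) : Prop :=
  ∀ (X Y : Type) (tX : TopologicalSpace X) (tY : TopologicalSpace Y),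
    K X tX → K Y tY → ∀ f g : X → Y, @Continuous X Y tX tY f → @Continuous X Y tX tY g →
      K {x | f x = g x} (subTop tX {x | f x = g x})

/-- `(X, t)` is sober: T₀ and every irreducible closed set is the closure of a point. -/
def Sober (X : Type) (t : TopologicalSpace X) : Prop := @T0Space X t ∧ @QuasiSober X t

/-!
The b-topology of a T₀ space is T₁, so finite sets, in particular `{x₁, x₂}`, are b-closed.
A finite space is Alexandrov-discrete, so its topology is determined by its specialization
order, and on `{x₁, x₂}` that order is the one of Sierpiński space.
-/

section BTopology

variable {X : Type} [t : TopologicalSpace X]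

lemma isOpen_bTop_inter_closure {U : Set X} {x : X} (hU : IsOpen U) (hx : x ∈ U) :
    @IsOpen X (bTop X t) (U ∩ closure {x}) :=
  .basic _ ⟨U, x, hU, hx, rfl⟩

/-- If `y ∈ cl {x}` and `y ≠ x`, then by T₀ some open `U ∋ x` misses `y`, and `U ∩ cl {x}`
separates `x` from `y`; otherwise `cl {x}` itself does. -/
theorem t1Space_bTop [T0Space X] : @T1Space X (bTop X t) := by
  refine @t1Space_iff_exists_open X (bTop X t) |>.2 fun x y hxy => ?_
  by_cases hy : y ∈ closure {x}
  · have hyx : ¬ y ⤳ x := fun h =>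
      hxy (h.antisymm (specializes_iff_mem_closure.2 hy)).eq.symm
    obtain ⟨U, hU, hxU, hyU⟩ := not_specializes_iff_exists_open.1 hyx
    exact ⟨_, isOpen_bTop_inter_closure hU hxU, ⟨hxU, subset_closure rfl⟩, fun h => hyU h.1⟩
  · exact ⟨_, isOpen_bTop_inter_closure isOpen_univ (Set.mem_univ x),
      ⟨Set.mem_univ x, subset_closure rfl⟩, fun h => hy h.2⟩

end BTopology

section Alexandrov

variable {X Y : Type*} [TopologicalSpace X] [TopologicalSpace Y]

lemma continuous_of_specializes [AlexandrovDiscrete X] {f : X → Y}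
    (hf : ∀ x y, x ⤳ y → f x ⤳ f y) : Continuous f :=
  continuous_def.2 fun _ hs => isOpen_iff_forall_specializes.2 fun x y hxy hy =>
    (hf x y hxy).mem_open hs hy

lemma isOpenMap_of_specializes [AlexandrovDiscrete Y] {f : X → Y} (hsurj : f.Surjective)
    (hf : ∀ x y, f x ⤳ f y → x ⤳ y) : IsOpenMap f := by
  intro U hU
  refine isOpen_iff_forall_specializes.2 fun a b hab => ?_
  rintro ⟨y, hy, rfl⟩
  obtain ⟨x, rfl⟩ := hsurj a
  exact ⟨x, (hf x y hab).mem_open hU hy, rfl⟩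

/-- Between Alexandrov-discrete spaces the topology is determined by specialization. -/
noncomputable def Homeomorph.ofSpecializesIff [T0Space X] [AlexandrovDiscrete X]
    [AlexandrovDiscrete Y] (f : X → Y) (hsurj : f.Surjective)
    (hf : ∀ x y, f x ⤳ f y ↔ x ⤳ y) : X ≃ₜ Y :=
  have hinj : f.Injective := fun x y hxy =>
    ((hf x y).1 (hxy ▸ specializes_rfl)).antisymm ((hf y x).1 (hxy ▸ specializes_rfl)) |>.eq
  (Equiv.ofBijective f ⟨hinj, hsurj⟩).toHomeomorphOfContinuousOpen
    (continuous_of_specializes fun x y => (hf x y).2)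
    (isOpenMap_of_specializes hsurj fun x y => (hf x y).1)

end Alexandrov

lemma Prop.specializes_iff {p q : Prop} : p ⤳ q ↔ (q → p) :=
  Topology.IsUpperSet.specializes_iff_le

/-- The pair `{x, y}` with `y ⤳ x` is Sierpiński space, `y` going to the open point `True`. -/
noncomputable def homeomorphPropOfSpecializes {X : Type} [TopologicalSpace X] [T0Space X]
    {x y : X} (hyx : y ⤳ x) (hne : x ≠ y) : ({x, y} : Set X) ≃ₜ Prop :=
  Homeomorph.ofSpecializesIff (fun a => (a : X) = y)
    (fun p => by
      by_cases hp : p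
      · exact ⟨⟨y, by simp⟩, by simp [hp]⟩
      · exact ⟨⟨x, by simp⟩, by simp [hp, hne]⟩)
    (by
      have hxy : ¬ x ⤳ y := fun h => hne (h.antisymm hyx).eq
      rintro ⟨a, rfl | rfl⟩ ⟨b, rfl | rfl⟩ <;>
        simp [subtype_specializes_iff, Prop.specializes_iff, hne, hxy, hyx, specializes_rfl])

/-- If `x₁ < x₂` in the specialization order of a T₀ space `X`, then `{x₁, x₂}` is
b-closed in `X` and, as a subspace of `X`, is homeomorphic to the Sierpiński space. -/
theorem statement0 {X : Type} [tX : TopologicalSpace X] [T0Space X] (x₁ x₂ : X)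
    (hle : specLE tX x₁ x₂) (hne : x₁ ≠ x₂) :
    @IsClosed X (bTop X tX) {x₁, x₂} ∧
      Nonempty (({x₁, x₂} : Set X) ≃ₜ Prop) :=
  ⟨@Set.Finite.isClosed X (bTop X tX) t1Space_bTop _ (Set.toFinite _),
    ⟨homeomorphPropOfSpecializes (specializes_iff_mem_closure.2 hle) hne⟩⟩
end

section
/- Let X, Y, Z be T₀ topological spaces, let k : X → Y be a continuous map such that k(X) is b-dense in Y, and let f : X → Z be a continuous map. Then there exists at most one continuous map g : Y → Z such that g ∘ k = f. -/
/-!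
The set where two continuous maps `g₁ g₂` into a T₀ space differ is b-open: if an open `V`
contains `g₁ y` but not `g₂ y`, then on the b-open set `g₁ ⁻¹' V ∩ cl {y}` the map `g₁` lands in
`V`, while every value of `g₂` there is a specialization of `g₂ y` and so stays outside `V`. Hence the
equalizer of `g₁` and `g₂` is b-closed, and it is everything once it contains a b-dense set.
-/

open TopologicalSpace

theorem isOpen_bTop_inter_closure_singleton {Y : Type} [tY : TopologicalSpace Y] {U : Set Y}
    {y : Y} (hU : IsOpen U) (hy : y ∈ U) : @IsOpen Y (bTop Y tY) (U ∩ closure {y}) :=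
  isOpen_generateFrom_of_mem ⟨U, y, hU, hy, rfl⟩

theorem ne_on_preimage_inter_closure_singleton {Y Z : Type} [TopologicalSpace Y]
    [TopologicalSpace Z] {g₁ g₂ : Y → Z} (hg₂ : Continuous g₂) {V : Set Z} (hV : IsOpen V)
    {y : Y} (hy₂ : g₂ y ∉ V) : ∀ z ∈ g₁ ⁻¹' V ∩ closure {y}, g₁ z ≠ g₂ z := by
  rintro z ⟨hzV, hz⟩ heq
  have hspec : g₂ y ⤳ g₂ z := (specializes_iff_mem_closure.mpr hz).map hg₂
  exact hy₂ (hspec.mem_open hV (heq ▸ hzV))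

theorem isClosed_bTop_setOf_eq {Y Z : Type} [tY : TopologicalSpace Y] [TopologicalSpace Z]
    [T0Space Z] {g₁ g₂ : Y → Z} (hg₁ : Continuous g₁) (hg₂ : Continuous g₂) :
    @IsClosed Y (bTop Y tY) {y | g₁ y = g₂ y} := by
  rw [← @isOpen_compl_iff Y _ (bTop Y tY), @isOpen_iff_forall_mem_open Y (bTop Y tY)]
  intro y hne
  obtain ⟨V, hV, ⟨hy₁, hy₂⟩ | ⟨hy₂, hy₁⟩⟩ := exists_isOpen_xor_mem hne
  · exact ⟨_, ne_on_preimage_inter_closure_singleton hg₂ hV hy₂,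
      isOpen_bTop_inter_closure_singleton (hV.preimage hg₁) hy₁, hy₁, subset_closure rfl⟩
  · exact ⟨_, fun z hz => (ne_on_preimage_inter_closure_singleton hg₁ hV hy₁ z hz).symm,
      isOpen_bTop_inter_closure_singleton (hV.preimage hg₂) hy₂, hy₂, subset_closure rfl⟩

theorem eq_of_eqOn_bDense {Y Z : Type} [tY : TopologicalSpace Y] [TopologicalSpace Z]
    [T0Space Z] {g₁ g₂ : Y → Z} (hg₁ : Continuous g₁) (hg₂ : Continuous g₂) {s : Set Y}
    (hs : @Dense Y (bTop Y tY) s) (hEq : Set.EqOn g₁ g₂ s) : g₁ = g₂ := by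
  have hclosed := isClosed_bTop_setOf_eq (tY := tY) hg₁ hg₂
  have huniv : {y | g₁ y = g₂ y} = Set.univ := by
    rw [← @IsClosed.closure_eq Y (bTop Y tY) _ hclosed]
    exact @Dense.closure_eq Y (bTop Y tY) _ (@Dense.mono Y (bTop Y tY) _ _ hEq hs)
  exact funext (Set.eq_univ_iff_forall.mp huniv)

theorem statement1_general {X Y Z : Type}
    [tY : TopologicalSpace Y] [tZ : TopologicalSpace Z]
    [T0Space Z]
    (k : X → Y) (hdense : @Dense Y (bTop Y tY) (Set.range k))
    (f : X → Z)
    (g₁ g₂ : Y → Z) (hg₁ : Continuous g₁) (hg₂ : Continuous g₂)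
    (hfk₁ : g₁ ∘ k = f) (hfk₂ : g₂ ∘ k = f) :
    g₁ = g₂ := by
  refine eq_of_eqOn_bDense hg₁ hg₂ hdense ?_
  rintro _ ⟨x, rfl⟩
  exact congrFun (hfk₁.trans hfk₂.symm) x

/-- if `k : X → Y` is continuous with b-dense range and `f : X → Z` is continuous,
then there is at most one continuous `g : Y → Z` with `g ∘ k = f`. -/
theorem statement1 {X Y Z : Type}
    [tX : TopologicalSpace X] [tY : TopologicalSpace Y] [tZ : TopologicalSpace Z]
    [T0Space X] [T0Space Y] [T0Space Z]
    (k : X → Y) (hk : Continuous k) (hdense : @Dense Y (bTop Y tY) (Set.range k))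
    (f : X → Z) (hf : Continuous f)
    (g₁ g₂ : Y → Z) (hg₁ : Continuous g₁) (hg₂ : Continuous g₂)
    (hfk₁ : g₁ ∘ k = f) (hfk₂ : g₂ ∘ k = f) :
    g₁ = g₂ :=
  statement1_general (tY := tY) (tZ := tZ) k hdense f g₁ g₂ hg₁ hg₂ hfk₁ hfk₂
end

section
/- Let K be a reflective full subcategory of Top₀ closed under homeomorphisms such that K ⊄ Top₁. Then K is b-closed-hereditary: if X ∈ K and A is a b-closed subset of X, then the subspace A belongs to K. -/
/-!
A non-T₁ member `S` of `K` contains points `b ⤳ a` with `a ≠ b`, i.e. a copy of Sierpiński space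
(`Prop` in Mathlib), so continuous maps into `S` detect open sets. Uniqueness of factorizations through the reflection
`μ : A → Y` therefore says that an open set of `Y` is determined by its `μ`-preimage. Let
`g : Y → X` extend the inclusion `A ⊆ X`. An open `W ⊆ Y` with `μ⁻¹ W = A ∩ U` must equal `g⁻¹ U`,
so `g` is an embedding. If `g p ∉ A`, b-closedness of `A` gives an open `U ∋ g p` with
`U ∩ cl {g p}` disjoint from `A`; then `g⁻¹ U` and `g⁻¹ U \ cl {p}` have the same `μ`-preimage but
differ at `p`. Hence `g` lands in `A`, and `μ` is a homeomorphism.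
-/

open TopologicalSpace

open Topology Function

theorem exists_specializes_ne_of_not_t1Space {S : Type*} [TopologicalSpace S]
    (h : ¬T1Space S) : ∃ a b : S, b ⤳ a ∧ a ≠ b := by
  simp only [t1Space_iff_specializes_imp_eq, not_forall] at h
  obtain ⟨b, a, hba, hne⟩ := h
  exact ⟨a, b, hba, Ne.symm hne⟩

open Classical in
theorem continuous_ite_of_specializes {S : Type*} [TopologicalSpace S] {a b : S} (h : b ⤳ a) :
    Continuous fun p : Prop => if p then b else a := by
  refine continuous_iff_continuousAt.2 fun p => ?_
  by_cases hp : p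
  · rw [eq_true hp, ContinuousAt, nhds_true]
    exact tendsto_pure_nhds _ _
  · rw [eq_false hp, ContinuousAt, nhds_false, if_neg not_false]
    refine tendsto_nhds.2 fun s hs has => Filter.eventually_top.2 fun q => ?_
    dsimp only; split_ifs
    exacts [h.mem_open hs has, has]

theorem exists_continuous_injective_prop_of_not_t1Space {S : Type*} [TopologicalSpace S]
    (h : ¬T1Space S) : ∃ j : Prop → S, Continuous j ∧ Injective j := by
  classical
  obtain ⟨a, b, hba, hne⟩ := exists_specializes_ne_of_not_t1Space h
  refine ⟨fun p => if p then b else a, continuous_ite_of_specializes hba, fun p q hpq => ?_⟩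
  by_cases hp : p <;> by_cases hq : q <;> simp_all [eq_comm]

theorem IsReflection.hom_ext {K : SpaceClass} {X Xk Z : Type} {tX : TopologicalSpace X}
    {tk : TopologicalSpace Xk} {tZ : TopologicalSpace Z} {μ : X → Xk}
    (hμ : IsReflection K tX tk μ) (hZ : K Z tZ) {g₁ g₂ : Xk → Z} (hg₁ : Continuous g₁)
    (hg₂ : Continuous g₂) (h : g₁ ∘ μ = g₂ ∘ μ) : g₁ = g₂ :=
  (hμ.2.2 Z tZ hZ _ (hg₁.comp hμ.2.1)).unique ⟨hg₁, rfl⟩ ⟨hg₂, h.symm⟩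

theorem IsReflection.injOn_preimage_isOpen {K : SpaceClass} {X Xk S : Type}
    {tX : TopologicalSpace X} {tk : TopologicalSpace Xk} {tS : TopologicalSpace S} {μ : X → Xk}
    (hμ : IsReflection K tX tk μ) (hS : K S tS) {j : Prop → S} (hj : Continuous j)
    (hj_inj : Injective j) : {V : Set Xk | IsOpen V}.InjOn (Set.preimage μ) := by
  intro V₁ hV₁ V₂ hV₂ hpre
  have hcomp : (j ∘ (· ∈ V₁)) = j ∘ (· ∈ V₂) :=
    hμ.hom_ext hS (hj.comp (continuous_Prop.2 hV₁)) (hj.comp (continuous_Prop.2 hV₂))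
      (funext fun x => congrArg j (congrArg (x ∈ ·) hpre))
  ext y
  exact Iff.of_eq (hj_inj (congrFun hcomp y))

theorem exists_isOpen_inter_closure_subset_of_isOpen_bTop {X : Type} [t : TopologicalSpace X]
    {s : Set X} (hs : IsOpen[bTop X t] s) {q : X} (hq : q ∈ s) :
    ∃ U : Set X, IsOpen U ∧ q ∈ U ∧ U ∩ closure {q} ⊆ s := by
  induction hs generalizing q with
  | basic s hs =>
    obtain ⟨U, x, hU, -, rfl⟩ := hs
    exact ⟨U, hU, hq.1, Set.inter_subset_inter_right U
      (specializes_iff_closure_subset.1 (specializes_iff_mem_closure.2 hq.2))⟩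
  | univ => exact ⟨Set.univ, isOpen_univ, trivial, Set.subset_univ _⟩
  | inter s₁ s₂ _ _ ih₁ ih₂ =>
    obtain ⟨U₁, hU₁, hqU₁, hsub₁⟩ := ih₁ hq.1
    obtain ⟨U₂, hU₂, hqU₂, hsub₂⟩ := ih₂ hq.2
    exact ⟨U₁ ∩ U₂, hU₁.inter hU₂, ⟨hqU₁, hqU₂⟩,
      fun z hz => ⟨hsub₁ ⟨hz.1.1, hz.2⟩, hsub₂ ⟨hz.1.2, hz.2⟩⟩⟩
  | sUnion S _ ih =>
    obtain ⟨s, hsS, hqs⟩ := hq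
    obtain ⟨U, hU, hqU, hsub⟩ := ih s hsS hqs
    exact ⟨U, hU, hqU, hsub.trans (Set.subset_sUnion_of_mem hsS)⟩

section SplitInclusion

variable {X Y : Type} [tX : TopologicalSpace X] [TopologicalSpace Y] {A : Set X} {μ : A → Y}
  {g : Y → X}

theorem isInducing_of_injOn_preimage_isOpen (hμc : Continuous μ) (hg : Continuous g)
    (hgμ : g ∘ μ = Subtype.val) (hμ : {V : Set Y | IsOpen V}.InjOn (Set.preimage μ)) :
    IsInducing g := by
  refine ⟨le_antisymm (continuous_iff_le_induced.1 hg) fun W hW => ?_⟩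
  obtain ⟨U, hU, hUW⟩ := isOpen_induced_iff.1 (hW.preimage hμc)
  refine ⟨U, hU, hμ (hU.preimage hg) hW ?_⟩
  rw [← Set.preimage_comp, hgμ, hUW]

theorem range_subset_of_isClosed_bTop (hA : IsClosed[bTop X tX] A) (hg : Continuous g)
    (hgμ : g ∘ μ = Subtype.val) (hμ : {V : Set Y | IsOpen V}.InjOn (Set.preimage μ)) :
    Set.range g ⊆ A := by
  rintro _ ⟨p, rfl⟩
  by_contra hpA
  obtain ⟨U, hU, hpU, hUA⟩ :=
    exists_isOpen_inter_closure_subset_of_isOpen_bTop hA.isOpen_compl hpA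
  have hV : g ⁻¹' U = g ⁻¹' U \ closure {p} := by
    refine hμ (hU.preimage hg) ((hU.preimage hg).sdiff isClosed_closure) ?_
    refine Set.ext fun x => ⟨fun hx => ⟨hx, fun hxp => ?_⟩, fun hx => hx.1⟩
    have hgx : g (μ x) = x := congrFun hgμ x
    have hpx : g p ⤳ x := hgx ▸ (specializes_iff_mem_closure.2 hxp).map hg
    exact hUA ⟨hgx ▸ hx, specializes_iff_mem_closure.1 hpx⟩ x.2
  exact (hV.subset hpU).2 (subset_closure rfl)

theorem isHomeomorph_of_isClosed_bTop [T0Space Y] (hA : IsClosed[bTop X tX] A)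
    (hμc : Continuous μ) (hg : Continuous g) (hgμ : g ∘ μ = Subtype.val)
    (hμ : {V : Set Y | IsOpen V}.InjOn (Set.preimage μ)) : IsHomeomorph μ := by
  have hg_inj : Injective g := (isInducing_of_injOn_preimage_isOpen hμc hg hgμ hμ).injective
  refine isHomeomorph_iff_isEmbedding_surjective.2
    ⟨.of_comp hμc hg (hgμ ▸ .subtypeVal), fun p => ?_⟩
  have hpA : g p ∈ A := range_subset_of_isClosed_bTop hA hg hgμ hμ ⟨p, rfl⟩
  exact ⟨⟨g p, hpA⟩, hg_inj (congrFun hgμ ⟨g p, hpA⟩)⟩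

end SplitInclusion

/-- a reflective full subcategory of Top₀ closed under homeomorphisms containing a
non-T₁ space is b-closed-hereditary. -/
theorem statement3 (K : SpaceClass) (hT0 : AllT0 K) (hHomeo : ClosedUnderHomeo K)
    (hRefl : IsReflective K) (hNotT1 : NotSubT1 K) :
    BClosedHereditary K := by
  intro X tX A hKX hA
  have := hT0 X tX hKX
  obtain ⟨S, tS, hKS, hS⟩ := hNotT1
  obtain ⟨j, hj, hj_inj⟩ := exists_continuous_injective_prop_of_not_t1Space hS
  obtain ⟨Y, tY, μ, hμ⟩ := hRefl A (subTop tX A) (inferInstanceAs (T0Space A))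
  have := hT0 Y tY hμ.1
  obtain ⟨g, ⟨hg, hgμ⟩, -⟩ := hμ.2.2 X tX hKX Subtype.val continuous_subtype_val
  have hμ_homeo : IsHomeomorph μ :=
    isHomeomorph_of_isClosed_bTop hA hμ.2.1 hg hgμ (hμ.injOn_preimage_isOpen hKS hj hj_inj)
  exact hHomeo Y A tY _ hμ.1 ⟨hμ_homeo.homeomorph.symm⟩
end

section
/- Let K be a reflective full subcategory of Top₀ closed under homeomorphisms such that K ⊄ Top₁. Then the Sierpiński space Σ2 belongs to K, and consequently for every set M the product space (Σ2)^M belongs to K. -/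
open TopologicalSpace

/-! A non-T₁ member of `K` has points `x ⤳ y` with `x ≠ y`, hence receives a non-constant
continuous map from `Σ2`. Through it, the reflection `μ : Σ2 → S` separates `True` from
`False`; as `S` is T₀, an open set of `S` containing `μ True` but not `μ False` is a continuous
left inverse of `μ`, which forces `μ` to be a homeomorphism. The projections give the same kind
of left inverse for the reflection of any product of members of `K`, so `K` is productive. -/

theorem true_specializes_false : True ⤳ False := by
  simp [Specializes]

theorem Specializes.exists_continuous_prop {Y : Type*} [TopologicalSpace Y] {x y : Y}
    (h : x ⤳ y) : ∃ f : Prop → Y, Continuous f ∧ f True = x ∧ f False = y := by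
  classical
  refine ⟨fun p => if p then x else y, continuous_iff_continuousAt.2 fun p => ?_, by simp, by simp⟩
  by_cases hp : p
  · rw [eq_true hp, ContinuousAt, nhds_true]
    exact tendsto_pure_nhds _ _
  · rw [eq_false hp, ContinuousAt, nhds_false, if_neg not_false]
    intro U hU
    simp only [Filter.mem_map, Filter.mem_top, Set.eq_univ_iff_forall, Set.mem_preimage]
    intro q
    by_cases hq : q <;> simp [hq, mem_of_mem_nhds hU, mem_of_mem_nhds (h hU)]

theorem exists_isOpen_mem_notMem_of_specializes {Y : Type*} [TopologicalSpace Y] [T0Space Y]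
    {x y : Y} (h : x ⤳ y) (hne : x ≠ y) : ∃ V : Set Y, IsOpen V ∧ x ∈ V ∧ y ∉ V :=
  not_specializes_iff_exists_open.1 fun h' => hne (h.antisymm h').eq

variable {K : SpaceClass}

theorem IsReflection.mem_of_leftInverse (hHomeo : ClosedUnderHomeo K) {X S : Type}
    [tX : TopologicalSpace X] [tS : TopologicalSpace S] {μ : X → S}
    (hμ : IsReflection K tX tS μ) {r : S → X} (hr : Continuous r)
    (hrμ : Function.LeftInverse r μ) : K X tX := by
  obtain ⟨hKS, hμc, hfactor⟩ := hμ
  -- `μ ∘ r` and `id` both factor `μ` through itself.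
  have hμr : Function.RightInverse r μ := by
    have h := (hfactor S tS hKS μ hμc).unique
      (y₁ := μ ∘ r) ⟨hμc.comp hr, funext fun x => congrArg μ (hrμ x)⟩ ⟨continuous_id, rfl⟩
    exact congrFun h
  exact hHomeo S X tS tX hKS ⟨⟨⟨r, μ, hμr, hrμ⟩, hr, hμc⟩⟩

theorem productive_of_isReflective (hT0 : AllT0 K) (hHomeo : ClosedUnderHomeo K)
    (hRefl : IsReflective K) : Productive K := by
  intro I X t hK
  have := fun i => hT0 (X i) (t i) (hK i)
  obtain ⟨Q, tQ, ν, hν⟩ := hRefl (∀ i, X i) _ inferInstance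
  choose g hg using fun i => (hν.2.2 (X i) (t i) (hK i) (fun x => x i) (continuous_apply i)).exists
  exact hν.mem_of_leftInverse hHomeo (r := fun q i => g i q) (continuous_pi fun i => (hg i).1)
    fun x => funext fun i => congrFun (hg i).2 x

theorem sierpinski_mem_of_continuous_ne (hT0 : AllT0 K) (hHomeo : ClosedUnderHomeo K)
    (hRefl : IsReflective K) {Y : Type} [tY : TopologicalSpace Y] (hY : K Y tY)
    {f : Prop → Y} (hf : Continuous f) (hne : f True ≠ f False) : K Prop sierpinskiSpace := by
  obtain ⟨S, tS, μ, hμ⟩ := hRefl Prop sierpinskiSpace inferInstance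
  obtain ⟨g, ⟨-, hgμ⟩, -⟩ := hμ.2.2 Y tY hY f hf
  have hμne : μ True ≠ μ False := fun h => hne (by rw [← hgμ, Function.comp_apply, h]; rfl)
  have := hT0 S tS hμ.1
  obtain ⟨V, hV, hTrue, hFalse⟩ :=
    exists_isOpen_mem_notMem_of_specializes (true_specializes_false.map hμ.2.1) hμne
  refine hμ.mem_of_leftInverse hHomeo (r := (· ∈ V)) (continuous_Prop.2 hV) fun p => ?_
  by_cases hp : p
  · simpa [eq_true hp] using hTrue
  · simpa [eq_false hp] using hFalse

/-- a reflective full subcategory of Top₀ closed under homeomorphisms containing a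
non-T₁ space contains the Sierpiński space, and all of its powers `(Σ2)^M`. -/
theorem statement4 (K : SpaceClass) (hT0 : AllT0 K) (hHomeo : ClosedUnderHomeo K)
    (hRefl : IsReflective K) (hNotT1 : NotSubT1 K) :
    K Prop sierpinskiSpace ∧
      ∀ M : Type, K (M → Prop) (Pi.topologicalSpace (t₂ := fun _ => sierpinskiSpace)) := by
  obtain ⟨Y, tY, hKY, hY⟩ := hNotT1
  obtain ⟨x, y, hxy, hne⟩ : ∃ x y : Y, x ⤳ y ∧ x ≠ y := by
    simpa [t1Space_iff_specializes_imp_eq] using hY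
  obtain ⟨f, hf, hfTrue, hfFalse⟩ := hxy.exists_continuous_prop
  have hSier : K Prop sierpinskiSpace := sierpinski_mem_of_continuous_ne hT0 hHomeo hRefl hKY hf
    (by rwa [hfTrue, hfFalse])
  exact ⟨hSier, fun M => productive_of_isReflective hT0 hHomeo hRefl M _ _ fun _ => hSier⟩
end

section
/- If K is a reflective full subcategory of Top₀ closed under homeomorphisms that contains the Sierpiński space Σ2, then K contains every sober space. Consequently, since Sob is itself reflective in Top₀, the reflective hull of the category Sier of spaces homeomorphic to Σ2 is exactly Sob. -/
open TopologicalSpace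

/-- The class of sober spaces. -/
def SobClass : SpaceClass := fun X t => Sober X t

/-- The class of spaces homeomorphic to the Sierpiński space. -/
def SierClass : SpaceClass := fun X t => Nonempty (@Homeomorph X Prop t sierpinskiSpace)

/-!
If the Sierpiński space lies in `K`, continuous maps into it are the characteristic maps of open
sets, so the universal property of a `K`-reflection `μ : X → Y` says precisely that `V ↦ μ ⁻¹' V`
is a bijection from the open sets of `Y` onto those of `X`. A continuous map from a sober space to
a T₀ space with this property is a homeomorphism: a point `y` is the image of the generic point of
the irreducible closed set `μ ⁻¹' closure {y}`. Hence every sober space is its own `K`-reflection.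
Conversely `Sob` is reflective, the reflection being the sobrification (the space of irreducible
closed sets), and the Sierpiński space is sober.
-/

open Topology

lemma mem_iff_preimage_inter_closure_nonempty {X Y : Type*} [TopologicalSpace Y] {f : X → Y}
    (hinj : ∀ V₁ V₂, IsOpen V₁ → IsOpen V₂ → f ⁻¹' V₁ = f ⁻¹' V₂ → V₁ = V₂)
    {V : Set Y} (hV : IsOpen V) (y : Y) :
    y ∈ V ↔ (f ⁻¹' (V ∩ closure {y})).Nonempty := by
  constructor
  · intro hy
    by_contra hempty
    have hpre : f ⁻¹' V = f ⁻¹' (V \ closure {y}) := by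
      ext x
      refine ⟨fun hx => ⟨hx, fun hxy => hempty ⟨x, hx, hxy⟩⟩, fun hx => hx.1⟩
    have hV' := hinj _ _ hV (hV.sdiff isClosed_closure) hpre
    exact (hV' ▸ hy).2 (subset_closure rfl)
  · rintro ⟨x, hxV, hxy⟩
    obtain ⟨z, rfl, hz⟩ :=
      (closure_inter_open_nonempty_iff hV).mp ⟨f x, hxy, hxV⟩
    exact hz

theorem isHomeomorph_of_preimage_bijOn_isOpen {X Y : Type*} [TopologicalSpace X]
    [TopologicalSpace Y] [T0Space X] [QuasiSober X] [T0Space Y] {f : X → Y} (hf : Continuous f)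
    (hsurj : ∀ U, IsOpen U → ∃ V, IsOpen V ∧ f ⁻¹' V = U)
    (hinj : ∀ V₁ V₂, IsOpen V₁ → IsOpen V₂ → f ⁻¹' V₁ = f ⁻¹' V₂ → V₁ = V₂) :
    IsHomeomorph f := by
  have hind : IsInducing f := by
    refine ⟨le_antisymm (continuous_iff_le_induced.mp hf) fun U hU => ?_⟩
    obtain ⟨V, hV, rfl⟩ := hsurj U hU
    exact ⟨V, hV, rfl⟩
  refine isHomeomorph_iff_isEmbedding_surjective.mpr ⟨hind.isEmbedding, fun y => ?_⟩
  have hmem := fun {V : Set Y} (hV : IsOpen V) =>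
    mem_iff_preimage_inter_closure_nonempty hinj hV
  have hirr : IsIrreducible (f ⁻¹' closure {y}) := by
    refine ⟨by simpa using (hmem isOpen_univ y).mp trivial, ?_⟩
    rintro U₁ U₂ hU₁ hU₂ ⟨x₁, hx₁, hx₁U⟩ ⟨x₂, hx₂, hx₂U⟩
    obtain ⟨V₁, hV₁, rfl⟩ := hsurj U₁ hU₁
    obtain ⟨V₂, hV₂, rfl⟩ := hsurj U₂ hU₂
    have hy₁ : y ∈ V₁ := (hmem hV₁ y).mpr ⟨x₁, hx₁U, hx₁⟩
    have hy₂ : y ∈ V₂ := (hmem hV₂ y).mpr ⟨x₂, hx₂U, hx₂⟩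
    obtain ⟨x, ⟨hxV₁, hxV₂⟩, hxy⟩ := (hmem (hV₁.inter hV₂) y).mp ⟨hy₁, hy₂⟩
    exact ⟨x, hxy, hxV₁, hxV₂⟩
  obtain ⟨x, hx⟩ := QuasiSober.sober hirr (isClosed_closure.preimage hf)
  refine ⟨x, (inseparable_iff_forall_isOpen.mpr fun V hV => ?_).eq⟩
  rw [hmem hV y, ← Set.mem_preimage, hx.mem_open_set_iff (hV.preimage hf), Set.preimage_inter,
    Set.inter_comm]

section Reflection

variable {K : SpaceClass} {X Y : Type} [tX : TopologicalSpace X] [tY : TopologicalSpace Y]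
  {μ : X → Y}

lemma IsReflection.exists_isOpen_preimage_eq (hμ : IsReflection K tX tY μ)
    (hSier : K Prop sierpinskiSpace) {U : Set X} (hU : IsOpen U) :
    ∃ V, IsOpen V ∧ μ ⁻¹' V = U := by
  obtain ⟨g, ⟨hg, hgμ⟩, -⟩ := hμ.2.2 Prop _ hSier (· ∈ U) (isOpen_iff_continuous_mem.mp hU)
  refine ⟨g ⁻¹' {True}, hg.isOpen_preimage _ isOpen_singleton_true, ?_⟩
  ext x
  simp [← hgμ]

lemma IsReflection.preimage_injOn_isOpen (hμ : IsReflection K tX tY μ)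
    (hSier : K Prop sierpinskiSpace) {V₁ V₂ : Set Y} (hV₁ : IsOpen V₁) (hV₂ : IsOpen V₂)
    (h : μ ⁻¹' V₁ = μ ⁻¹' V₂) : V₁ = V₂ := by
  have hχ₁ := isOpen_iff_continuous_mem.mp hV₁
  have hχ₂ := isOpen_iff_continuous_mem.mp hV₂
  obtain ⟨g, -, hg⟩ := hμ.2.2 Prop _ hSier _ (hχ₁.comp hμ.2.1)
  have hχ : (· ∈ V₁) = (· ∈ V₂) :=
    (hg _ ⟨hχ₁, rfl⟩).trans (hg _ ⟨hχ₂, funext fun x => by simp [← Set.mem_preimage, h]⟩).symm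
  ext y
  exact iff_of_eq (congrFun hχ y)

end Reflection

theorem mem_of_sober_of_isReflective {K : SpaceClass} (hT0 : AllT0 K)
    (hHomeo : ClosedUnderHomeo K) (hRefl : IsReflective K) (hSier : K Prop sierpinskiSpace)
    (X : Type) (tX : TopologicalSpace X) (hX : Sober X tX) : K X tX := by
  obtain ⟨Y, tY, μ, hμ⟩ := hRefl X tX hX.1
  have := hX.1
  have := hX.2
  have := hT0 Y tY hμ.1
  have hhomeo : IsHomeomorph μ := isHomeomorph_of_preimage_bijOn_isOpen hμ.2.1
    (fun _ => hμ.exists_isOpen_preimage_eq hSier) (fun _ _ => hμ.preimage_injOn_isOpen hSier)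
  exact hHomeo Y X tY tX hμ.1 ⟨(hhomeo.homeomorph μ).symm⟩

def Sobrification (X : Type) [TopologicalSpace X] : Type :=
  {C : Set X // IsIrreducible C ∧ IsClosed C}

namespace Sobrification

variable {X : Type} [TopologicalSpace X]

def basicOpen (U : Set X) : Set (Sobrification X) :=
  {C | (C.1 ∩ U).Nonempty}

lemma basicOpen_inter {U V : Set X} (hU : IsOpen U) (hV : IsOpen V) :
    basicOpen (U ∩ V) = basicOpen U ∩ basicOpen V := by
  ext C
  refine ⟨fun ⟨x, hxC, hxU, hxV⟩ => ⟨⟨x, hxC, hxU⟩, ⟨x, hxC, hxV⟩⟩, fun ⟨hCU, hCV⟩ => ?_⟩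
  obtain ⟨x, hxC, hxU, hxV⟩ := C.2.1.2 U V hU hV hCU hCV
  exact ⟨x, hxC, hxU, hxV⟩

lemma basicOpen_iUnion {ι : Sort*} (U : ι → Set X) :
    basicOpen (⋃ i, U i) = ⋃ i, basicOpen (U i) := by
  ext C
  simp [basicOpen, Set.inter_iUnion]

instance : TopologicalSpace (Sobrification X) where
  IsOpen s := ∃ U, IsOpen U ∧ basicOpen U = s
  isOpen_univ := ⟨Set.univ, isOpen_univ, Set.eq_univ_of_forall fun C => by
    simpa [basicOpen] using C.2.1.nonempty⟩
  isOpen_inter := by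
    rintro _ _ ⟨U, hU, rfl⟩ ⟨V, hV, rfl⟩
    exact ⟨U ∩ V, hU.inter hV, basicOpen_inter hU hV⟩
  isOpen_sUnion S hS := by
    choose U hU hUs using hS
    refine ⟨⋃ s : S, U s s.2, isOpen_iUnion fun s => hU s s.2, ?_⟩
    rw [basicOpen_iUnion, Set.sUnion_eq_iUnion]
    simp only [hUs]

lemma isOpen_basicOpen {U : Set X} (hU : IsOpen U) : IsOpen (basicOpen U) :=
  ⟨U, hU, rfl⟩

lemma specializes_iff {C D : Sobrification X} : C ⤳ D ↔ D.1 ⊆ C.1 := by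
  refine ⟨fun h x hxD => ?_, fun h => specializes_iff_forall_open.mpr ?_⟩
  · by_contra hxC
    obtain ⟨y, hyC, hyC'⟩ := specializes_iff_forall_open.mp h _
      (isOpen_basicOpen C.2.2.isOpen_compl) ⟨x, hxD, hxC⟩
    exact hyC' hyC
  · rintro _ ⟨U, -, rfl⟩ ⟨x, hxD, hxU⟩
    exact ⟨x, h hxD, hxU⟩

instance : T0Space (Sobrification X) :=
  (t0Space_iff_inseparable _).mpr fun _ _ h =>
    Subtype.ext <| (specializes_iff.mp h.specializes').antisymm (specializes_iff.mp h.specializes)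

def pure (x : X) : Sobrification X :=
  ⟨closure {x}, isIrreducible_singleton.closure, isClosed_closure⟩

lemma pure_mem_basicOpen {U : Set X} (hU : IsOpen U) {x : X} : pure x ∈ basicOpen U ↔ x ∈ U := by
  change (closure {x} ∩ U).Nonempty ↔ _
  rw [closure_inter_open_nonempty_iff hU, Set.singleton_inter_nonempty]

lemma continuous_pure : Continuous (pure : X → Sobrification X) := by
  refine continuous_def.mpr ?_
  rintro _ ⟨U, hU, rfl⟩
  convert hU
  ext x
  exact pure_mem_basicOpen hU

lemma notMem_basicOpen {U : Set X} {C : Sobrification X} : C ∉ basicOpen U ↔ C.1 ⊆ Uᶜ := by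
  change ¬(C.1 ∩ U).Nonempty ↔ _
  rw [Set.not_nonempty_iff_eq_empty, Set.subset_compl_iff_disjoint_right,
    Set.disjoint_iff_inter_eq_empty]

lemma isIrreducible_of_isIrreducible_setOf_subset {T : Set X} (hT : IsClosed T)
    (h : IsIrreducible {C : Sobrification X | C.1 ⊆ T}) : IsIrreducible T := by
  obtain ⟨C, hCT⟩ := h.nonempty
  refine ⟨C.2.1.nonempty.mono hCT, ?_⟩
  rintro V₁ V₂ hV₁ hV₂ ⟨x₁, hx₁T, hx₁V⟩ ⟨x₂, hx₂T, hx₂V⟩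
  have hpure : ∀ x ∈ T, (pure x).1 ⊆ T := fun x hx =>
    closure_minimal (Set.singleton_subset_iff.mpr hx) hT
  obtain ⟨D, hDT, hD⟩ := h.2 _ _ (isOpen_basicOpen hV₁) (isOpen_basicOpen hV₂)
    ⟨pure x₁, hpure x₁ hx₁T, (pure_mem_basicOpen hV₁).mpr hx₁V⟩
    ⟨pure x₂, hpure x₂ hx₂T, (pure_mem_basicOpen hV₂).mpr hx₂V⟩
  rw [← basicOpen_inter hV₁ hV₂] at hD
  obtain ⟨z, hzD, hzV⟩ := hD
  exact ⟨z, hDT hzD, hzV⟩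

instance : QuasiSober (Sobrification X) where
  sober {S} hS hSc := by
    obtain ⟨U, hU, hUS⟩ := hSc.isOpen_compl
    have hS_eq : S = {C : Sobrification X | C.1 ⊆ Uᶜ} := by
      ext C
      rw [Set.mem_ofPred_eq, ← notMem_basicOpen, hUS, Set.notMem_compl_iff]
    subst hS_eq
    refine ⟨⟨Uᶜ, isIrreducible_of_isIrreducible_setOf_subset hU.isClosed_compl hS,
      hU.isClosed_compl⟩, ?_⟩
    ext C
    exact specializes_iff_mem_closure.symm.trans specializes_iff

lemma preimage_eq_basicOpen {Z : Type*} [TopologicalSpace Z] {g : Sobrification X → Z}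
    (hg : Continuous g) {V : Set Z} (hV : IsOpen V) :
    g ⁻¹' V = basicOpen ((g ∘ pure) ⁻¹' V) := by
  obtain ⟨U, hU, hUV⟩ := hV.preimage hg
  have hpure : (g ∘ pure) ⁻¹' V = U := by
    ext x
    simp [Set.preimage_comp, ← hUV, pure_mem_basicOpen hU]
  rw [hpure, hUV]

lemma hom_ext {Z : Type*} [TopologicalSpace Z] [T0Space Z] {g₁ g₂ : Sobrification X → Z}
    (hg₁ : Continuous g₁) (hg₂ : Continuous g₂) (h : g₁ ∘ pure = g₂ ∘ pure) : g₁ = g₂ :=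
  funext fun C => (inseparable_iff_forall_isOpen.mpr fun V hV => by
    rw [← Set.mem_preimage, ← Set.mem_preimage, preimage_eq_basicOpen hg₁ hV,
      preimage_eq_basicOpen hg₂ hV, h]).eq

section Lift

variable {Z : Type*} [TopologicalSpace Z] [QuasiSober Z] {f : X → Z} (hf : Continuous f)

noncomputable def lift (C : Sobrification X) : Z :=
  (C.2.1.image f hf.continuousOn).genericPoint

lemma isGenericPoint_lift (C : Sobrification X) :
    IsGenericPoint (lift hf C) (closure (f '' C.1)) :=
  (C.2.1.image f hf.continuousOn).isGenericPoint_genericPoint_closure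

lemma preimage_lift {V : Set Z} (hV : IsOpen V) : lift hf ⁻¹' V = basicOpen (f ⁻¹' V) := by
  ext C
  rw [Set.mem_preimage, (isGenericPoint_lift hf C).mem_open_set_iff hV,
    closure_inter_open_nonempty_iff hV, Set.image_inter_nonempty_iff]
  rfl

lemma continuous_lift : Continuous (lift hf) := continuous_def.mpr fun V hV => by
  rw [preimage_lift hf hV]
  exact isOpen_basicOpen (hV.preimage hf)

lemma lift_comp_pure [T0Space Z] : lift hf ∘ pure = f := by
  funext x
  refine (isGenericPoint_lift hf (pure x)).eq ?_
  rw [pure, closure_image_closure hf, Set.image_singleton]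
  exact isGenericPoint_closure

end Lift

theorem isReflection_pure :
    IsReflection SobClass ‹TopologicalSpace X› inferInstance (pure : X → Sobrification X) := by
  refine ⟨⟨inferInstance, inferInstance⟩, continuous_pure, fun Z tZ hZ f hf => ?_⟩
  have := hZ.1
  have := hZ.2
  exact ⟨lift hf, ⟨continuous_lift hf, lift_comp_pure hf⟩,
    fun g ⟨hg, hgf⟩ => hom_ext hg (continuous_lift hf) (hgf.trans (lift_comp_pure hf).symm)⟩

end Sobrification

theorem sobClass_isReflective : IsReflective SobClass :=
  fun _ _ _ => ⟨_, _, _, Sobrification.isReflection_pure⟩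

theorem sober_sierpinskiSpace : Sober Prop sierpinskiSpace := by
  refine ⟨inferInstance, ⟨fun {S} hS hSc => ⟨sSup S, ?_⟩⟩⟩
  -- `Prop` carries the upper topology: closed sets are lower sets, and `S` is finite
  have hmax : sSup S ∈ S := hS.nonempty.csSup_mem S.toFinite
  rw [IsGenericPoint, IsUpper.closure_singleton]
  exact subset_antisymm (fun p hp => IsUpper.isLowerSet_of_isClosed hSc hp hmax)
    (fun p hp => le_sSup hp)

theorem Sober.of_homeomorph {X Y : Type} [TopologicalSpace X] [TopologicalSpace Y] (e : X ≃ₜ Y)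
    (h : Sober X ‹_›) : Sober Y ‹_› :=
  have := h.1
  have := h.2
  ⟨e.symm.isEmbedding.t0Space, e.symm.isClosedEmbedding.quasiSober⟩

/-- every reflective full subcategory of Top₀ closed under homeomorphisms that
contains the Sierpiński space contains every sober space; consequently, `Sob` is reflective,
contains `Sier`, and is the smallest such reflective subcategory, i.e. the reflective hull of
`Sier` is `Sob`. -/
theorem statement7 :
    (∀ K : SpaceClass, AllT0 K → ClosedUnderHomeo K → IsReflective K →
      K Prop sierpinskiSpace →
      ∀ (X : Type) (tX : TopologicalSpace X), Sober X tX → K X tX)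
    ∧ IsReflective SobClass
    ∧ (∀ (X : Type) (t : TopologicalSpace X), SierClass X t → SobClass X t)
    ∧ (∀ K : SpaceClass, AllT0 K → ClosedUnderHomeo K → IsReflective K →
        (∀ (X : Type) (t : TopologicalSpace X), SierClass X t → K X t) →
        ∀ (X : Type) (t : TopologicalSpace X), SobClass X t → K X t) := by
  refine ⟨fun K => mem_of_sober_of_isReflective, sobClass_isReflective,
    fun X t ⟨e⟩ => sober_sierpinskiSpace.of_homeomorph e.symm, ?_⟩
  intro K hT0 hHomeo hRefl hSier
  exact mem_of_sober_of_isReflective hT0 hHomeo hRefl (hSier Prop _ ⟨Homeomorph.refl Prop⟩)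
end

section
/- Let X be a T₀ topological space and E ⊆ X. The following are equivalent: (1) E is b-closed in X; (2) there exist a set M and continuous maps f, g : X → (Σ2)^M such that E = {x ∈ X : f(x) = g(x)}; (3) there exist a T₀ space Y and continuous maps f, g : X → Y such that E = {x ∈ X : f(x) = g(x)}. -/
open TopologicalSpace

/-!
A point `p` has the basic b-neighbourhoods `U ∩ cl {p}`, `U` an open neighbourhood of `p`.
If `f p ≠ g p` for continuous `f g` into a T₀ space, an open `V` contains `f p` but not `g p`
(or vice versa); on `f ⁻¹' V ∩ cl {p}` we have `f y ∈ V` while `g y`, a specialization of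
`g p`, lies outside `V`, so equalizers are b-closed. Conversely, if `E` is b-closed, choose for
each `p ∉ E` an open `U_p ∋ p` with `U_p ∩ cl {p}` disjoint from `E`; then `E` is the equalizer
of the Sierpiński-valued maps `y ↦ (y ∈ U_p)_p` and `y ↦ (y ∈ U_p \ cl {p})_p`.
-/

open Set

section BTopology

variable {X : Type} [tX : TopologicalSpace X]

lemma isTopologicalBasis_bTop :
    @IsTopologicalBasis X (bTop X tX)
      {s | ∃ (U : Set X) (x : X), IsOpen U ∧ x ∈ U ∧ s = U ∩ closure {x}} := by
  refine @IsTopologicalBasis.mk X (bTop X tX) _ ?_ ?_ rfl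
  · rintro _ ⟨U₁, x₁, hU₁, -, rfl⟩ _ ⟨U₂, x₂, hU₂, -, rfl⟩ x ⟨⟨hxU₁, hx₁⟩, ⟨hxU₂, hx₂⟩⟩
    refine ⟨(U₁ ∩ U₂) ∩ closure {x}, ⟨U₁ ∩ U₂, x, hU₁.inter hU₂, ⟨hxU₁, hxU₂⟩, rfl⟩,
      ⟨⟨hxU₁, hxU₂⟩, subset_closure rfl⟩, ?_⟩
    rintro y ⟨⟨hy₁, hy₂⟩, hy⟩
    exact ⟨⟨hy₁, closure_minimal (singleton_subset_iff.2 hx₁) isClosed_closure hy⟩,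
      ⟨hy₂, closure_minimal (singleton_subset_iff.2 hx₂) isClosed_closure hy⟩⟩
  · exact eq_univ_of_forall fun x =>
      ⟨univ ∩ closure {x}, ⟨univ, x, isOpen_univ, trivial, rfl⟩, trivial, subset_closure rfl⟩

lemma isOpen_bTop_iff {s : Set X} :
    @IsOpen X (bTop X tX) s ↔ ∀ p ∈ s, ∃ U, IsOpen U ∧ p ∈ U ∧ U ∩ closure {p} ⊆ s := by
  rw [@IsTopologicalBasis.isOpen_iff X (bTop X tX) _ _ isTopologicalBasis_bTop]
  refine forall₂_congr fun p _ => ⟨?_, ?_⟩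
  · rintro ⟨_, ⟨U, x, hU, -, rfl⟩, ⟨hpU, hpx⟩, hsub⟩
    refine ⟨U, hU, hpU, (inter_subset_inter_right U ?_).trans hsub⟩
    exact closure_minimal (singleton_subset_iff.2 hpx) isClosed_closure
  · rintro ⟨U, hU, hpU, hsub⟩
    exact ⟨U ∩ closure {p}, ⟨U, p, hU, hpU, rfl⟩, ⟨hpU, subset_closure rfl⟩, hsub⟩

lemma preimage_inter_closure_subset_setOf_ne {Y : Type} [TopologicalSpace Y] {f g : X → Y}
    (hg : Continuous g) {V : Set Y} (hV : IsOpen V) {p : X} (hgp : g p ∉ V) :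
    f ⁻¹' V ∩ closure {p} ⊆ {y | f y ≠ g y} := by
  rintro y ⟨hfy, hpy⟩ hfg
  have hspec : g p ⤳ g y := (specializes_iff_mem_closure.2 hpy).map hg
  exact hgp (hspec.mem_open hV (hfg ▸ hfy))

lemma isClosed_bTop_setOf_eq_s9 {Y : Type} [TopologicalSpace Y] [T0Space Y] {f g : X → Y}
    (hf : Continuous f) (hg : Continuous g) :
    @IsClosed X (bTop X tX) {x | f x = g x} := by
  refine @IsClosed.mk X (bTop X tX) _ (isOpen_bTop_iff.2 fun p hp => ?_)
  obtain ⟨V, hV, ⟨hfp, hgp⟩ | ⟨hgp, hfp⟩⟩ := exists_isOpen_xor_mem (hp : f p ≠ g p)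
  · exact ⟨f ⁻¹' V, hV.preimage hf, hfp, preimage_inter_closure_subset_setOf_ne hg hV hgp⟩
  · exact ⟨g ⁻¹' V, hV.preimage hg, hgp, fun y hy hfg =>
      preimage_inter_closure_subset_setOf_ne hf hV hfp hy hfg.symm⟩

end BTopology

lemma setOf_mem_eq_mem_diff {X M : Type} (U C : M → Set X) :
    {y | (fun i => y ∈ U i) = (fun i => y ∈ U i \ C i)} = (⋃ i, U i ∩ C i)ᶜ := by
  ext y
  simp only [mem_ofPred_eq, funext_iff, eq_iff_iff, mem_sdiff, mem_compl_iff, mem_iUnion,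
    mem_inter_iff, not_exists, not_and]
  exact forall_congr' fun i => ⟨fun h hU => (h.1 hU).2, fun h => ⟨fun hU => ⟨hU, h hU⟩, And.left⟩⟩

lemma exists_sierpinski_equalizer_of_isClosed_bTop {X : Type} [tX : TopologicalSpace X]
    {E : Set X} (hE : @IsClosed X (bTop X tX) E) :
    ∃ (M : Type) (f g : X → (M → Prop)),
      Continuous f ∧ Continuous g ∧ E = {x | f x = g x} := by
  have hnbhd := isOpen_bTop_iff.1 hE.isOpen_compl
  choose U hU hpU hsub using fun p : ↥Eᶜ => hnbhd p p.2
  refine ⟨↥Eᶜ, fun y p => y ∈ U p, fun y p => y ∈ U p \ closure {(p : X)},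
    continuous_pi fun p => continuous_Prop.2 (hU p),
    continuous_pi fun p => continuous_Prop.2 ((hU p).sdiff isClosed_closure), ?_⟩
  rw [setOf_mem_eq_mem_diff, ← compl_inj_iff, compl_compl]
  exact Subset.antisymm (fun p hp => mem_iUnion.2 ⟨⟨p, hp⟩, hpU _, subset_closure rfl⟩)
    (iUnion_subset hsub)

theorem statement9_general {X : Type} [tX : TopologicalSpace X] (E : Set X) :
    (@IsClosed X (bTop X tX) E ↔
      ∃ (M : Type) (f g : X → (M → Prop)),
        Continuous f ∧ Continuous g ∧ E = {x | f x = g x})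
    ∧ (@IsClosed X (bTop X tX) E ↔
      ∃ (Y : Type) (tY : TopologicalSpace Y), @T0Space Y tY ∧
        ∃ f g : X → Y, @Continuous X Y tX tY f ∧ @Continuous X Y tX tY g ∧
          E = {x | f x = g x}) := by
  have sierpinski_to_t0 : (∃ (M : Type) (f g : X → (M → Prop)),
        Continuous f ∧ Continuous g ∧ E = {x | f x = g x}) →
      ∃ (Y : Type) (tY : TopologicalSpace Y), @T0Space Y tY ∧
        ∃ f g : X → Y, @Continuous X Y tX tY f ∧ @Continuous X Y tX tY g ∧
          E = {x | f x = g x} := fun ⟨M, f, g, hf, hg, hE⟩ =>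
    ⟨M → Prop, inferInstance, inferInstance, f, g, hf, hg, hE⟩
  have t0_to_bClosed : (∃ (Y : Type) (tY : TopologicalSpace Y), @T0Space Y tY ∧
        ∃ f g : X → Y, @Continuous X Y tX tY f ∧ @Continuous X Y tX tY g ∧
          E = {x | f x = g x}) → @IsClosed X (bTop X tX) E := by
    rintro ⟨Y, tY, hY, f, g, hf, hg, rfl⟩
    exact isClosed_bTop_setOf_eq_s9 hf hg
  exact ⟨⟨exists_sierpinski_equalizer_of_isClosed_bTop,
      fun h => t0_to_bClosed (sierpinski_to_t0 h)⟩,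
    ⟨fun h => sierpinski_to_t0 (exists_sierpinski_equalizer_of_isClosed_bTop h), t0_to_bClosed⟩⟩

/-- for `E ⊆ X` with `X` T₀, the following are equivalent: (1) `E` is b-closed;
(2) `E` is the equalizer of two continuous maps into a power of the Sierpiński space;
(3) `E` is the equalizer of two continuous maps into a T₀ space. -/
theorem statement9 {X : Type} [tX : TopologicalSpace X] [T0Space X] (E : Set X) :
    (@IsClosed X (bTop X tX) E ↔
      ∃ (M : Type) (f g : X → (M → Prop)),
        Continuous f ∧ Continuous g ∧ E = {x | f x = g x})
    ∧ (@IsClosed X (bTop X tX) E ↔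
      ∃ (Y : Type) (tY : TopologicalSpace Y), @T0Space Y tY ∧
        ∃ f g : X → Y, @Continuous X Y tX tY f ∧ @Continuous X Y tX tY g ∧
          E = {x | f x = g x}) :=
  statement9_general (tX := tX) E
end

section
/- Let K be a reflective full subcategory of Top₀ closed under homeomorphisms such that K ⊄ Top₁, let Z be a sober space and let X be a subspace of Z. Define cl_k(X) = ⋂{A : X ⊆ A ⊆ Z and the subspace A belongs to K}, regarded as a subspace of Z. Then the inclusion map e_X : X → cl_k(X) is a K-reflection for X. -/
open TopologicalSpace

/-!
A reflective subcategory of `Top₀` is closed under the limits of `Top₀`, so `K` contains products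
of its members and every subspace of a member that is an equalizer of maps into members. A non-T₁
member has the Sierpiński space as a retract, and a sober `Z` is the subspace of `Prop ^ Opens Z`
cut out by the frame equations, so `Z ∈ K` and hence `cl_k(S) ∈ K`. A continuous `f : S → W` into
a member of `K` extends to an equalizer subspace of `Z` containing `S` (the points whose trace on
open extensions of the sets `f⁻¹ V` is that of a point of `W`), hence to `cl_k(S)`; two
extensions agree on their equalizer, again a member of `K` containing `S`.
-/

open Function Topology

/-- The points of a sober space are exactly the completely prime filters of opens. -/
theorem range_productOfMemOpens {Z : Type} [TopologicalSpace Z] [QuasiSober Z] :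
    Set.range (productOfMemOpens Z) =
      {ξ | (∀ F : Finset (Opens Z), ξ (F.inf id) ↔ ∀ u ∈ F, ξ u) ∧
        ∀ s : Set (Opens Z), ξ (sSup s) ↔ ∃ u ∈ s, ξ u} := by
  classical
  refine Set.Subset.antisymm ?_ fun ξ ⟨hinf, hsup⟩ => ?_
  · rintro _ ⟨z, rfl⟩
    refine ⟨fun F => ?_, fun s => Opens.mem_sSup⟩
    change z ∈ ((F.inf id : Opens Z) : Set Z) ↔ ∀ u ∈ F, z ∈ u
    rw [Opens.coe_finset_inf]
    simp [Finset.inf_eq_iInf]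
  have hmono {u v : Opens Z} (huv : u ≤ v) (hu : ξ u) : ξ v := by
    simpa [sup_of_le_right huv] using (hsup {u, v}).2 ⟨u, by simp, hu⟩
  -- `ξ` is the filter of opens meeting `C`, the complement of the largest open outside it.
  set V := sSup {u : Opens Z | ¬ ξ u}
  have hV : ¬ ξ V := fun h => by
    obtain ⟨u, hu, hξu⟩ := (hsup _).1 h
    exact hu hξu
  set C : Set Z := (V : Set Z)ᶜ
  have hmeet (u : Opens Z) : ξ u ↔ (C ∩ u).Nonempty := by
    rw [Set.inter_comm, Set.inter_compl_nonempty_iff, SetLike.coe_subset_coe]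
    exact ⟨fun hu hle => hV (hmono hle hu), fun h => by_contra fun hu => h (le_sSup hu)⟩
  have hC : IsIrreducible C := by
    refine ⟨by simpa using (hmeet ⊤).1 ((hinf ∅).2 (by simp)), fun u v hu hv hCu hCv => ?_⟩
    have huv := (hinf {(⟨u, hu⟩ : Opens Z), ⟨v, hv⟩}).2
      (by simp [(hmeet ⟨u, hu⟩).2 hCu, (hmeet ⟨v, hv⟩).2 hCv])
    simpa using (hmeet _).1 huv
  obtain ⟨z, hz⟩ := QuasiSober.sober hC V.isOpen.isClosed_compl
  exact ⟨z, funext fun u => propext ((hz.mem_open_set_iff u.isOpen).trans (hmeet u).symm)⟩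

/-- `cl_k(S)` of the paper. -/
def kClosure (K : SpaceClass) {Z : Type} (tZ : TopologicalSpace Z) (S : Set Z) : Set Z :=
  ⋂₀ {A : Set Z | S ⊆ A ∧ K A (subTop tZ A)}

section kClosure

variable {K : SpaceClass} {Z : Type} [tZ : TopologicalSpace Z]

theorem subset_kClosure (S : Set Z) : S ⊆ kClosure K tZ S :=
  fun _ hs _ hA => hA.1 hs

theorem kClosure_subset {S A : Set Z} (hSA : S ⊆ A) (hA : K A (subTop tZ A)) :
    kClosure K tZ S ⊆ A :=
  Set.sInter_subset_of_mem ⟨hSA, hA⟩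

end kClosure

theorem IsReflection.mem_of_leftInverse_s13 {K : SpaceClass} (hHomeo : ClosedUnderHomeo K)
    {X Xk : Type} [tX : TopologicalSpace X] [tk : TopologicalSpace Xk] {μ : X → Xk}
    (hμ : IsReflection K tX tk μ) {q : Xk → X} (hq : Continuous q) (hqμ : q ∘ μ = id) :
    K X tX := by
  obtain ⟨hXk, hμc, hfactor⟩ := hμ
  have hμq : μ ∘ q = id := (hfactor Xk tk hXk μ hμc).unique
    ⟨hμc.comp hq, by rw [comp_assoc, hqμ, comp_id]⟩ ⟨continuous_id, id_comp μ⟩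
  exact hHomeo Xk X tk tX hXk ⟨⟨⟨q, μ, congrFun hμq, congrFun hqμ⟩, hq, hμc⟩⟩

namespace SpaceClass

variable {K : SpaceClass} (hT0 : AllT0 K) (hHomeo : ClosedUnderHomeo K) (hRefl : IsReflective K)
  (hNotT1 : NotSubT1 K)

include hHomeo hRefl in
theorem mem_of_retract {X Y : Type} [tX : TopologicalSpace X] [T0Space X]
    [tY : TopologicalSpace Y] (hY : K Y tY) {s : X → Y} {r : Y → X} (hs : Continuous s)
    (hr : Continuous r) (hrs : r ∘ s = id) : K X tX := by
  obtain ⟨Xk, tk, μ, hμ⟩ := hRefl X tX ‹_›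
  obtain ⟨s', ⟨hs', hs'μ⟩, -⟩ := hμ.2.2 Y tY hY s hs
  exact hμ.mem_of_leftInverse_s13 hHomeo (hr.comp hs') (by rw [comp_assoc, hs'μ, hrs])

include hT0 hHomeo hRefl in
theorem mem_pi {ι : Type} {X : ι → Type} [t : ∀ i, TopologicalSpace (X i)]
    (hX : ∀ i, K (X i) (t i)) : K (∀ i, X i) Pi.topologicalSpace := by
  have (i : ι) : T0Space (X i) := hT0 _ _ (hX i)
  obtain ⟨Xk, tk, μ, hμ⟩ := hRefl (∀ i, X i) _ inferInstance
  choose e he using fun i => (hμ.2.2 (X i) (t i) (hX i) _ (continuous_apply i)).exists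
  exact hμ.mem_of_leftInverse_s13 hHomeo (continuous_pi fun i => (he i).1)
    (funext fun x => funext fun i => congrFun (he i).2 x)

include hT0 hHomeo hRefl in
theorem mem_prod {X Y : Type} [tX : TopologicalSpace X] [tY : TopologicalSpace Y]
    (hX : K X tX) (hY : K Y tY) : K (X × Y) instTopologicalSpaceProd := by
  have := hT0 X tX hX
  have := hT0 Y tY hY
  obtain ⟨Xk, tk, μ, hμ⟩ := hRefl (X × Y) _ inferInstance
  obtain ⟨e₁, he₁, he₁μ⟩ := (hμ.2.2 X tX hX Prod.fst continuous_fst).exists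
  obtain ⟨e₂, he₂, he₂μ⟩ := (hμ.2.2 Y tY hY Prod.snd continuous_snd).exists
  exact hμ.mem_of_leftInverse_s13 hHomeo (he₁.prodMk he₂)
    (funext fun p => Prod.ext (congrFun he₁μ p) (congrFun he₂μ p))

include hT0 hHomeo hRefl in
theorem mem_of_isEmbedding_of_range_eq {X Y W : Type} [tX : TopologicalSpace X]
    [tY : TopologicalSpace Y] [tW : TopologicalSpace W] (hY : K Y tY) (hW : K W tW)
    {f g : Y → W} (hf : Continuous f) (hg : Continuous g) {e : X → Y} (he : IsEmbedding e)
    (hrange : Set.range e = {y | f y = g y}) : K X tX := by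
  have := hT0 Y tY hY
  obtain ⟨Xk, tk, μ, hμ⟩ := hRefl X tX he.t0Space
  obtain ⟨v, ⟨hv, hvμ⟩, -⟩ := hμ.2.2 Y tY hY e he.continuous
  have hfv : f ∘ v = g ∘ v := (hμ.2.2 W tW hW (f ∘ e) (hf.comp he.continuous)).unique
    ⟨hf.comp hv, by rw [comp_assoc, hvμ]⟩
    ⟨hg.comp hv, by rw [comp_assoc, hvμ]; exact funext fun x => (hrange.subset ⟨x, rfl⟩).symm⟩
  have hv_range (k : Xk) : v k ∈ Set.range e := hrange ▸ congrFun hfv k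
  exact hμ.mem_of_leftInverse_s13 hHomeo (q := fun k => he.toHomeomorph.symm ⟨v k, hv_range k⟩)
    (he.toHomeomorph.symm.continuous.comp (hv.subtype_mk _))
    (funext fun x => he.toHomeomorph.symm_apply_eq.2 (Subtype.ext (congrFun hvμ x)))

include hT0 hHomeo hRefl in
theorem mem_of_isEmbedding_of_range_eq_forall {X Y ι : Type} {W : ι → Type}
    [tX : TopologicalSpace X] [tY : TopologicalSpace Y] [tW : ∀ i, TopologicalSpace (W i)]
    (hY : K Y tY) (hW : ∀ i, K (W i) (tW i)) {f g : ∀ i, Y → W i}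
    (hf : ∀ i, Continuous (f i)) (hg : ∀ i, Continuous (g i)) {e : X → Y}
    (he : IsEmbedding e) (hrange : Set.range e = {y | ∀ i, f i y = g i y}) : K X tX :=
  mem_of_isEmbedding_of_range_eq hT0 hHomeo hRefl hY (mem_pi hT0 hHomeo hRefl hW)
    (continuous_pi hf) (continuous_pi hg) he (by rw [hrange]; simp only [funext_iff])

include hT0 hHomeo hRefl hNotT1 in
/-- A specialization `a ⤳ b` with `a ≠ b` in a member of `K` exhibits `Prop` as a retract of
that member. -/
theorem mem_sierpinski : K Prop sierpinskiSpace := by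
  classical
  obtain ⟨X, tX, hX, hnT1⟩ := hNotT1
  have := hT0 X tX hX
  obtain ⟨a, b, hab, hne⟩ : ∃ a b : X, a ⤳ b ∧ a ≠ b := by
    simpa [t1Space_iff_specializes_imp_eq] using hnT1
  have hba : a ∉ closure {b} := fun h => hne (hab.antisymm (specializes_iff_mem_closure.2 h)).eq
  refine mem_of_retract hHomeo hRefl hX (s := fun p => if p then a else b)
    (r := fun x => x ∉ closure {b}) ?_ (continuous_Prop.2 isClosed_closure.isOpen_compl) ?_
  · refine continuous_def.2 fun V hV => Topology.IsUpperSet.isOpen_iff_isUpperSet.2 ?_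
    intro p q hpq hp
    by_cases hq : q
    · by_cases hp' : p
      · simpa [hp', hq] using hp
      · simpa [hq] using hab.mem_open hV (by simpa [hp'] using hp)
    · simpa [hq, show ¬p from fun h => hq (hpq h)] using hp
  · funext p
    by_cases hp : p <;> simp [hp, hba, subset_closure (Set.mem_singleton b)]

include hT0 hHomeo hRefl hNotT1 in
theorem mem_of_quasiSober {Z : Type} [tZ : TopologicalSpace Z] [T0Space Z] [QuasiSober Z] :
    K Z tZ := by
  have hP := mem_sierpinski hT0 hHomeo hRefl hNotT1
  refine mem_of_isEmbedding_of_range_eq_forall hT0 hHomeo hRefl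
    (ι := Finset (Opens Z) ⊕ Set (Opens Z)) (mem_pi hT0 hHomeo hRefl fun _ => hP) (fun _ => hP)
    (f := fun i ξ => i.elim (fun F => ξ (F.inf id)) (fun s => ξ (sSup s)))
    (g := fun i ξ => i.elim (fun F => ∀ u ∈ F, ξ u) (fun s => ∃ u ∈ s, ξ u))
    ?_ ?_ (productOfMemOpens_isEmbedding Z) ?_
  · rintro (F | s) <;> exact continuous_apply _
  · rintro (F | s) <;> refine continuous_Prop.2 ?_
    · convert isOpen_biInter_finset fun u (_ : u ∈ F) => continuous_Prop.1 (continuous_apply u)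
      ext; simp
    · convert isOpen_biUnion fun u (_ : u ∈ s) => continuous_Prop.1 (continuous_apply u)
      ext; simp
  · rw [range_productOfMemOpens]
    ext ξ
    simp [Sum.forall, eq_iff_iff]

variable {Z : Type} [tZ : TopologicalSpace Z]

include hT0 hHomeo hRefl in
/-- `⋂₀ 𝒜` is the equalizer of `(z, a) ↦ (z)_A` and `(z, a) ↦ (a_A)_A` on `Z × ∏_{A ∈ 𝒜} A`. -/
theorem mem_sInter (hZ : K Z tZ) {𝒜 : Set (Set Z)} (h𝒜 : ∀ A ∈ 𝒜, K A (subTop tZ A)) :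
    K (⋂₀ 𝒜) (subTop tZ (⋂₀ 𝒜)) := by
  let e : ⋂₀ 𝒜 → Z × ∀ A : 𝒜, A.1 := fun z => (z, fun A => ⟨z, z.2 A A.2⟩)
  have he : Continuous e :=
    continuous_subtype_val.prodMk (continuous_pi fun _ => continuous_subtype_val.subtype_mk _)
  refine mem_of_isEmbedding_of_range_eq_forall hT0 hHomeo hRefl (W := fun _ : 𝒜 => Z)
    (mem_prod hT0 hHomeo hRefl hZ (mem_pi hT0 hHomeo hRefl fun A : 𝒜 => h𝒜 A.1 A.2))
    (fun _ => hZ) (f := fun A p => (p.2 A).1) (g := fun _ p => p.1)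
    (fun A => continuous_subtype_val.comp ((continuous_apply A).comp continuous_snd))
    (fun _ => continuous_fst)
    (IsEmbedding.of_comp (f := e) he continuous_fst IsEmbedding.subtypeVal) ?_
  refine Set.Subset.antisymm (by rintro _ ⟨z, rfl⟩ A; rfl) fun p hp => ?_
  refine ⟨⟨p.1, fun A hA => hp ⟨A, hA⟩ ▸ (p.2 ⟨A, hA⟩).2⟩, ?_⟩
  exact Prod.ext rfl (funext fun A => Subtype.ext (hp A).symm)

include hT0 hHomeo hRefl hNotT1 in
/-- With opens `U V` of `Z` tracing `f⁻¹ V` on `S`, the extension domain `A` consists of the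
`z` for which `{V | z ∈ U V}` is the neighbourhood system of a point of the T₀ space `W`;
its graph is an equalizer in `Z × W`. -/
theorem exists_extension {W : Type} [tW : TopologicalSpace W] (hZ : K Z tZ) (hW : K W tW)
    {S : Set Z} {f : S → W} (hf : Continuous f) :
    ∃ (A : Set Z) (hSA : S ⊆ A), K A (subTop tZ A) ∧
      ∃ g : A → W, Continuous g ∧ g ∘ Set.inclusion hSA = f := by
  have := hT0 W tW hW
  choose U hU hUf using fun V : Opens W => isOpen_induced_iff.1 (V.isOpen.preimage hf)
  have hunique {z : Z} {w w' : W} (h : ∀ V, z ∈ U V ↔ w ∈ V) (h' : ∀ V, z ∈ U V ↔ w' ∈ V) :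
      w = w' :=
    productOfMemOpens_injective W (funext fun V => propext ((h V).symm.trans (h' V)))
  let A : Set Z := {z | ∃ w : W, ∀ V, z ∈ U V ↔ w ∈ V}
  have hfS (s : S) (V : Opens W) : s.1 ∈ U V ↔ f s ∈ V := Set.ext_iff.1 (hUf V) s
  have hSA : S ⊆ A := fun s hs => ⟨f ⟨s, hs⟩, hfS ⟨s, hs⟩⟩
  let g : A → W := fun z => z.2.choose
  have hg (z : A) : ∀ V, z.1 ∈ U V ↔ g z ∈ V := z.2.choose_spec
  have hgc : Continuous g := (productOfMemOpens_isInducing W).continuous_iff.2 <|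
    continuous_pi fun V => continuous_Prop.2 <| by
      convert (hU V).preimage continuous_subtype_val using 1
      exact Set.ext fun z => (hg z V).symm
  refine ⟨A, hSA, ?_, g, hgc, funext fun s => hunique (hg _) (hfS s)⟩
  let e : A → Z × W := fun z => (z, g z)
  have he : Continuous e := continuous_subtype_val.prodMk hgc
  refine mem_of_isEmbedding_of_range_eq_forall hT0 hHomeo hRefl (W := fun _ : Opens W => Prop)
    (mem_prod hT0 hHomeo hRefl hZ hW) (fun _ => mem_sierpinski hT0 hHomeo hRefl hNotT1)
    (f := fun V p => p.1 ∈ U V) (g := fun V p => p.2 ∈ V)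
    (fun V => continuous_Prop.2 ((hU V).preimage continuous_fst))
    (fun V => continuous_Prop.2 (V.isOpen.preimage continuous_snd))
    (IsEmbedding.of_comp (f := e) he continuous_fst IsEmbedding.subtypeVal) ?_
  refine Set.Subset.antisymm (by rintro _ ⟨z, rfl⟩ V; exact propext (hg z V)) fun p hp => ?_
  have hp' (V : Opens W) : p.1 ∈ U V ↔ p.2 ∈ V := (hp V).to_iff
  exact ⟨⟨p.1, p.2, hp'⟩, Prod.ext rfl (hunique (hg _) hp')⟩

include hT0 hHomeo hRefl in
theorem kClosure_hom_ext {S : Set Z} (hcl : K (kClosure K tZ S) (subTop tZ (kClosure K tZ S)))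
    {W : Type} [tW : TopologicalSpace W] (hW : K W tW) {g g' : kClosure K tZ S → W}
    (hg : Continuous g) (hg' : Continuous g')
    (h : g ∘ Set.inclusion (subset_kClosure S) = g' ∘ Set.inclusion (subset_kClosure S)) :
    g = g' := by
  let B : Set Z := Subtype.val '' {c | g c = g' c}
  have hB : B ⊆ kClosure K tZ S := Subtype.coe_image_subset _ _
  have hSB : S ⊆ B := fun s hs => ⟨⟨s, subset_kClosure S hs⟩, congrFun h ⟨s, hs⟩, rfl⟩
  have hBK : K B (subTop tZ B) :=
    mem_of_isEmbedding_of_range_eq hT0 hHomeo hRefl hcl hW hg hg' (IsEmbedding.inclusion hB)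
      (by rw [Set.range_inclusion]; exact Set.ext fun c => Subtype.val_injective.mem_set_image)
  funext c
  obtain ⟨c', hc', hc'c⟩ := kClosure_subset hSB hBK c.2
  exact Subtype.val_injective hc'c ▸ hc'

include hT0 hHomeo hRefl hNotT1 in
theorem isReflection_inclusion_kClosure (hZ : K Z tZ) (S : Set Z) :
    IsReflection K (subTop tZ S) (subTop tZ (kClosure K tZ S))
      (Set.inclusion (subset_kClosure S)) := by
  have hcl := mem_sInter hT0 hHomeo hRefl hZ fun A (hA : A ∈ {A | S ⊆ A ∧ _}) => hA.2
  refine ⟨hcl, continuous_inclusion _, fun W tW hW f hf => ?_⟩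
  obtain ⟨A, hSA, hA, g, hg, hgf⟩ := exists_extension hT0 hHomeo hRefl hNotT1 hZ hW hf
  refine ⟨g ∘ Set.inclusion (kClosure_subset hSA hA),
    ⟨hg.comp (continuous_inclusion _), by rw [comp_assoc, Set.inclusion_comp_inclusion, hgf]⟩,
    fun g' ⟨hg', hg'f⟩ => ?_⟩
  refine kClosure_hom_ext hT0 hHomeo hRefl hcl hW hg' (hg.comp (continuous_inclusion _)) ?_
  rw [hg'f, comp_assoc, Set.inclusion_comp_inclusion, hgf]

end SpaceClass

/-- let `K` be a reflective full subcategory of Top₀ closed under homeomorphisms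
containing a non-T₁ space, `Z` sober and `S ⊆ Z`. Then with
`cl_k(S) = ⋂ {A | S ⊆ A ⊆ Z, subspace A ∈ K}`, the inclusion `S → cl_k(S)` is a K-reflection
for the subspace `S`. -/
theorem statement13 (K : SpaceClass) (hT0 : AllT0 K) (hHomeo : ClosedUnderHomeo K)
    (hRefl : IsReflective K) (hNotT1 : NotSubT1 K)
    (Z : Type) (tZ : TopologicalSpace Z) (hZ : Sober Z tZ) (S : Set Z) :
    ∃ h : S ⊆ ⋂₀ {A : Set Z | S ⊆ A ∧ K A (subTop tZ A)},
      IsReflection K (subTop tZ S)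
        (subTop tZ (⋂₀ {A : Set Z | S ⊆ A ∧ K A (subTop tZ A)}))
        (Set.inclusion h) := by
  obtain ⟨_, _⟩ := hZ
  exact ⟨subset_kClosure S, SpaceClass.isReflection_inclusion_kClosure hT0 hHomeo hRefl hNotT1
    (SpaceClass.mem_of_quasiSober hT0 hHomeo hRefl hNotT1) S⟩
end
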